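/- Let q ≥ 5 be a prime power and let C = PRS(q+1,q−3). Assume that the covering radius of C equals 3. Then the number of distinct cosets u + C with u ∈ F_q^{q+1} and d(u,C) = 3 equals (q−1)(q³ + 2q² + q)/2. -/

import Mathlib

open Polynomial

/-- The error distance from a word `u` to a code `C`. -/
noncomputable def errDist {ι F : Type*} [Fintype ι] [DecidableEq F]
    (u : ι → F) (C : Set (ι → F)) : ℕ :=
  sInf {d | ∃ c ∈ C, hammingDist u c = d}

/-- The covering radius of a code `C`. -/
noncomputable def covRad {ι F : Type*} [Fintype ι] [DecidableEq F]
    (C : Set (ι → F)) : ℕ :=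
  sSup {d | ∃ u : ι → F, errDist u C = d}

/-- The projective Reed–Solomon code of length `q + 1` and dimension `k`. -/
def PRS (F : Type*) [Field F] (k : ℕ) : Set (Option F → F) :=
  {w | ∃ f : F[X], f.degree < (k : ℕ) ∧ (∀ x : F, w (some x) = f.eval x) ∧
    w none = f.coeff (k - 1)}

/-! `PRS(q+1, k)` is MDS: a nonzero codeword comes from `f ≠ 0` with `deg f < k`, which has at
most `deg f` roots, and whose coordinate at infinity is nonzero when `deg f = k - 1`; so its
weight is at least `q + 2 - k`, which is `5` for `k = q - 3`. Hence the Hamming ball of radius 2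
injects into the `q ^ 4` cosets, and its image is exactly the set of cosets at error distance
`≤ 2`. With covering radius 3, every other coset is at distance exactly 3, which leaves
`q ^ 4 - (1 + (q + 1)(q - 1) + (q + 1 choose 2)(q - 1) ^ 2)` deep-hole cosets. -/

open Finset

section HammingBall

variable {ι α : Type*} [Fintype ι] [DecidableEq ι] [Fintype α] [DecidableEq α] [Zero α]

theorem card_filter_support_eq (s : Finset ι) :
    #{w : ι → α | ({i | w i ≠ 0} : Finset ι) = s} = (Fintype.card α - 1) ^ #s := by
  have hpi : ({w : ι → α | ({i | w i ≠ 0} : Finset ι) = s} : Finset (ι → α)) =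
      Fintype.piFinset fun i => if i ∈ s then univ.erase 0 else {0} := by
    ext w
    simp only [mem_filter, mem_univ, true_and, Fintype.mem_piFinset, Finset.ext_iff]
    refine forall_congr' fun i => ?_
    split_ifs with hi <;> simp [hi]
  rw [hpi, Fintype.card_piFinset]
  simp only [apply_ite card, card_erase_of_mem (mem_univ _), card_singleton, card_univ]
  rw [prod_ite_mem, univ_inter, prod_const]

theorem card_filter_hammingNorm_eq (j : ℕ) :
    #{w : ι → α | hammingNorm w = j} = (Fintype.card ι).choose j * (Fintype.card α - 1) ^ j := by
  rw [card_eq_sum_card_fiberwise (s := {w : ι → α | hammingNorm w = j})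
    (f := fun w : ι → α => ({i | w i ≠ 0} : Finset ι)) (t := powersetCard j univ)
    (fun w hw => mem_powersetCard_univ.mpr (mem_filter.mp hw).2)]
  rw [sum_congr rfl fun s hs => ?_, sum_const, card_powersetCard, card_univ, smul_eq_mul]
  rw [filter_filter, ← (mem_powersetCard_univ.mp hs), ← card_filter_support_eq s]
  congr 1
  ext w
  simp only [mem_filter, mem_univ, true_and, and_iff_right_iff_imp]
  rintro rfl
  rfl

theorem card_filter_hammingNorm_le (t : ℕ) :
    #{w : ι → α | hammingNorm w ≤ t} =
      ∑ j ∈ range (t + 1), (Fintype.card ι).choose j * (Fintype.card α - 1) ^ j := by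
  rw [card_eq_sum_card_fiberwise (s := {w : ι → α | hammingNorm w ≤ t}) (f := hammingNorm)
    (t := range (t + 1)) (fun w hw => mem_range_succ_iff.mpr (mem_filter.mp hw).2)]
  refine sum_congr rfl fun j hj => ?_
  rw [filter_filter, ← card_filter_hammingNorm_eq j]
  congr 1
  ext w
  simp only [mem_filter, mem_univ, true_and, and_iff_right_iff_imp]
  rintro rfl
  exact mem_range_succ_iff.mp hj

end HammingBall

theorem hammingNorm_option {ι α : Type*} [Fintype ι] [DecidableEq α] [Zero α] (w : Option ι → α) :
    hammingNorm w = hammingNorm (w ∘ some) + if w none = 0 then 0 else 1 := by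
  simp only [hammingNorm, card_filter, Fintype.sum_option, Function.comp_apply]
  split_ifs <;> simp_all [add_comm]

section ErrorDistance

variable {ι α : Type*} [Fintype ι] [DecidableEq α]

theorem errDist_le_hammingDist {C : Set (ι → α)} (u : ι → α) {c : ι → α} (hc : c ∈ C) :
    errDist u C ≤ hammingDist u c :=
  Nat.sInf_le ⟨c, hc, rfl⟩

theorem exists_hammingDist_eq_errDist {C : Set (ι → α)} (hC : C.Nonempty) (u : ι → α) :
    ∃ c ∈ C, hammingDist u c = errDist u C :=
  let ⟨c, hc⟩ := hC
  Nat.sInf_mem (s := {d | ∃ c ∈ C, hammingDist u c = d}) ⟨_, c, hc, rfl⟩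

theorem errDist_le_card (u : ι → α) (C : Set (ι → α)) : errDist u C ≤ Fintype.card ι := by
  rcases C.eq_empty_or_nonempty with rfl | ⟨c, hc⟩
  · simp [errDist]
  · exact (errDist_le_hammingDist u hc).trans hammingDist_le_card_fintype

theorem errDist_le_covRad (u : ι → α) (C : Set (ι → α)) : errDist u C ≤ covRad C :=
  le_csSup ⟨Fintype.card ι, by rintro _ ⟨v, rfl⟩; exact errDist_le_card v C⟩ ⟨u, rfl⟩

theorem hammingDist_add_right [AddGroup α] (u v c : ι → α) :
    hammingDist (u + c) (v + c) = hammingDist u v := by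
  simp [hammingDist]

theorem hammingNorm_sub [AddGroup α] (u v : ι → α) : hammingNorm (u - v) = hammingDist u v := by
  simp [hammingNorm, hammingDist, sub_eq_zero]

variable [AddGroup α] (C : AddSubgroup (ι → α))

theorem errDist_add_mem_le (u : ι → α) {c : ι → α} (hc : c ∈ C) :
    errDist (u + c) C ≤ errDist u C := by
  obtain ⟨c', hc', hdist⟩ := exists_hammingDist_eq_errDist ⟨0, C.zero_mem⟩ u
  calc errDist (u + c) C ≤ hammingDist (u + c) (c' + c) :=
        errDist_le_hammingDist _ (C.add_mem hc' hc)
    _ = errDist u C := by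
        rw [hammingDist_add_right, hdist]

theorem errDist_eq_of_mk_eq {u v : ι → α} (h : (u : (ι → α) ⧸ C) = v) :
    errDist u C = errDist v C := by
  have huv : -u + v ∈ C := QuotientAddGroup.eq.mp h
  refine le_antisymm ?_ ?_
  · simpa using errDist_add_mem_le C v (C.neg_mem huv)
  · simpa using errDist_add_mem_le C u huv

theorem mk_mem_image_errDist_iff (p : ℕ → Prop) (u : ι → α) :
    (u : (ι → α) ⧸ C) ∈ QuotientAddGroup.mk '' {v | p (errDist v C)} ↔ p (errDist u C) :=
  ⟨fun ⟨_, hv, hvu⟩ => errDist_eq_of_mk_eq C hvu ▸ hv, fun hu => ⟨u, hu, rfl⟩⟩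

theorem image_mk_errDist_le (t : ℕ) :
    QuotientAddGroup.mk '' {u | errDist u C ≤ t} =
      (QuotientAddGroup.mk '' {w | hammingNorm w ≤ t} : Set ((ι → α) ⧸ C)) := by
  ext x
  obtain ⟨u, rfl⟩ := QuotientAddGroup.mk_surjective x
  refine ⟨fun hu => ?_, fun ⟨w, hw, hwu⟩ => ?_⟩
  · obtain ⟨c, hc, hdist⟩ := exists_hammingDist_eq_errDist ⟨0, C.zero_mem⟩ u
    refine ⟨u - c, ?_, QuotientAddGroup.eq.mpr ?_⟩
    · rw [Set.mem_ofPred_eq, hammingNorm_sub, hdist]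
      exact (mk_mem_image_errDist_iff C (· ≤ t) u).mp hu
    · simpa [sub_eq_add_neg] using hc
  · rw [← hwu, mk_mem_image_errDist_iff C (· ≤ t)]
    simpa using (errDist_le_hammingDist w C.zero_mem).trans hw

theorem injOn_mk_hammingNorm_le {t : ℕ} (hC : ∀ c ∈ C, c ≠ 0 → 2 * t < hammingNorm c) :
    Set.InjOn (QuotientAddGroup.mk : (ι → α) → (ι → α) ⧸ C) {w | hammingNorm w ≤ t} := by
  intro w hw w' hw' h
  have hmem : -w + w' ∈ C := QuotientAddGroup.eq.mp h
  by_contra hne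
  have hnorm : hammingNorm (-w + w') ≤ 2 * t := by
    rw [← hammingDist_eq_hammingNorm]
    calc hammingDist w w' ≤ hammingDist w 0 + hammingDist 0 w' := hammingDist_triangle _ _ _
      _ ≤ 2 * t := by
        rw [hammingDist_zero_right, hammingDist_comm, hammingDist_zero_right]
        exact (add_le_add hw hw').trans_eq (two_mul t).symm
  exact (hC _ hmem (by rwa [Ne, neg_add_eq_zero])).not_ge hnorm

theorem ncard_image_mk_errDist_eq_succ [Fintype α] [DecidableEq ι] {t : ℕ}
    (hC : ∀ c ∈ C, c ≠ 0 → 2 * t < hammingNorm c)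
    (hρ : ∀ u, errDist u (C : Set (ι → α)) ≤ t + 1) :
    (QuotientAddGroup.mk '' {u | errDist u C = t + 1} : Set ((ι → α) ⧸ C)).ncard =
      Nat.card ((ι → α) ⧸ C) -
        ∑ j ∈ range (t + 1), (Fintype.card ι).choose j * (Fintype.card α - 1) ^ j := by
  have hcompl : QuotientAddGroup.mk '' {u | errDist u C = t + 1} =
      (QuotientAddGroup.mk '' {u | errDist u C ≤ t} : Set ((ι → α) ⧸ C))ᶜ := by
    ext x
    obtain ⟨u, rfl⟩ := QuotientAddGroup.mk_surjective x
    rw [Set.mem_compl_iff, mk_mem_image_errDist_iff C (· = t + 1),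
      mk_mem_image_errDist_iff C (· ≤ t)]
    have := hρ u
    omega
  rw [hcompl, Set.ncard_compl, image_mk_errDist_le, (injOn_mk_hammingNorm_le C hC).ncard_image,
    ← card_filter_hammingNorm_le, Set.ncard_eq_toFinset_card']
  simp

end ErrorDistance

section Cosets

variable {G : Type*} [AddGroup G] (C : AddSubgroup G)

theorem image_add_coe_eq_preimage_mk (u : G) :
    (u + ·) '' (C : Set G) = QuotientAddGroup.mk ⁻¹' {(u : G ⧸ C)} := by
  ext v
  rw [Set.mem_preimage, Set.mem_singleton_iff, eq_comm, QuotientAddGroup.eq]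
  exact ⟨by rintro ⟨c, hc, rfl⟩; simpa, fun h => ⟨_, h, add_neg_cancel_left u v⟩⟩

theorem card_cosets_eq_ncard_image_mk (P : G → Prop) :
    Nat.card {S : Set G // ∃ u, P u ∧ S = (u + ·) '' C} =
      (QuotientAddGroup.mk '' {u | P u} : Set (G ⧸ C)).ncard := by
  have hinj : Function.Injective fun x : G ⧸ C => QuotientAddGroup.mk ⁻¹' {x} :=
    (Set.preimage_injective.mpr QuotientAddGroup.mk_surjective).comp Set.singleton_injective
  rw [← Set.ncard_image_of_injective _ hinj, Set.image_image, ← Nat.card_coe_set_eq]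
  refine Nat.card_congr (Equiv.subtypeEquivRight fun S => ?_)
  simp only [image_add_coe_eq_preimage_mk, Set.mem_image, Set.mem_ofPred_eq, eq_comm]

end Cosets

theorem pow_four_sub_card_hammingBall_two (q : ℕ) :
    q ^ 4 - ∑ j ∈ range 3, (q + 1).choose j * (q - 1) ^ j =
      (q - 1) * (q ^ 3 + 2 * q ^ 2 + q) / 2 := by
  rcases q with _ | r
  · simp
  simp only [sum_range_succ, sum_range_zero, Nat.add_sub_cancel, Nat.choose_zero_right,
    Nat.choose_one_right, pow_zero, pow_one, zero_add, mul_one]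
  set m := (r + 1 + 1).choose 2
  have hm : (r + 1 + 1) * (r + 1) = m * 2 := by
    rw [← Nat.add_one_mul_choose_eq, Nat.choose_one_right]
  have hdiv : r * ((r + 1) ^ 3 + 2 * (r + 1) ^ 2 + (r + 1)) / 2 = m * r * (r + 2) := by
    refine Nat.div_eq_of_eq_mul_left two_pos ?_
    linear_combination (r * (r + 2)) * hm
  rw [hdiv]
  refine Nat.sub_eq_of_eq_add ?_
  refine Nat.eq_of_mul_eq_mul_left two_pos ?_
  linear_combination (2 * r * (r + 1)) * hm

section ProjectiveReedSolomon

variable (F : Type*) [Field F]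

noncomputable def prsEncode (k : ℕ) : degreeLT F k →ₗ[F] Option F → F :=
  LinearMap.pi (fun i => i.elim (lcoeff F (k - 1)) leval) ∘ₗ (degreeLT F k).subtype

noncomputable def prsCode (k : ℕ) : AddSubgroup (Option F → F) :=
  (LinearMap.range (prsEncode F k)).toAddSubgroup

theorem coe_prsCode (k : ℕ) : (prsCode F k : Set (Option F → F)) = PRS F k := by
  ext w
  refine ⟨?_, fun ⟨f, hdeg, hev, hnone⟩ => ⟨⟨f, mem_degreeLT.mpr hdeg⟩, ?_⟩⟩
  · rintro ⟨f, rfl⟩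
    exact ⟨f, mem_degreeLT.mp f.2, fun x => rfl, rfl⟩
  · funext i
    cases i
    · exact hnone.symm
    · exact (hev _).symm

variable [Fintype F]

theorem prsEncode_injective {k : ℕ} (hk : k ≤ Fintype.card F) :
    Function.Injective (prsEncode F k) := by
  refine (injective_iff_map_eq_zero _).mpr fun f hf => Subtype.ext ?_
  by_contra hf0
  have hlt : f.1.natDegree < Fintype.card F :=
    ((natDegree_lt_iff_degree_lt hf0).mpr (mem_degreeLT.mp f.2)).trans_le hk
  exact hf0 (eq_zero_of_natDegree_lt_card_of_eval_eq_zero f.1 Function.injective_id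
    (fun x => congrFun hf (some x)) hlt)

theorem card_prsCode {k : ℕ} (hk : k ≤ Fintype.card F) :
    Nat.card (prsCode F k) = Fintype.card F ^ k := by
  rw [show Nat.card (prsCode F k) = Nat.card (degreeLT F k) from
      Nat.card_congr (LinearEquiv.ofInjective _ (prsEncode_injective F hk)).toEquiv.symm,
    Nat.card_congr (degreeLTEquiv F k).toEquiv, Nat.card_eq_fintype_card, Fintype.card_fun,
    Fintype.card_fin]

theorem card_quotient_prsCode {k : ℕ} (hk : k ≤ Fintype.card F) :
    Nat.card ((Option F → F) ⧸ prsCode F k) = Fintype.card F ^ (Fintype.card F + 1 - k) := by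
  have h := AddSubgroup.card_eq_card_quotient_mul_card_addSubgroup (prsCode F k)
  rw [card_prsCode F hk, Nat.card_fun, Nat.card_eq_fintype_card (α := Option F),
    Fintype.card_option, Nat.card_eq_fintype_card,
    ← pow_sub_mul_pow _ (hk.trans (Nat.le_succ _))] at h
  exact (Nat.eq_of_mul_eq_mul_right (pow_pos Fintype.card_pos _) h).symm

variable [DecidableEq F]

theorem card_add_two_le_hammingNorm_add_of_mem_PRS {k : ℕ} {w : Option F → F}
    (hw : w ∈ PRS F k) (hw0 : w ≠ 0) : Fintype.card F + 2 ≤ hammingNorm w + k := by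
  obtain ⟨f, hdeg, hev, hnone⟩ := hw
  have hf : f ≠ 0 := by
    rintro rfl
    exact hw0 (funext fun i => by cases i <;> simp [hev, hnone])
  have hnd : f.natDegree < k := (natDegree_lt_iff_degree_lt hf).mpr hdeg
  have hroots : #{x | f.eval x = 0} ≤ f.natDegree :=
    card_le_degree_of_subset_roots fun x hx => (mem_roots hf).mpr (mem_filter.mp hx).2
  have hsplit : #{x | f.eval x = 0} + #{x | f.eval x ≠ 0} = Fintype.card F :=
    card_filter_add_card_filter_not _
  have hnorm : hammingNorm w = #{x | f.eval x ≠ 0} + if f.coeff (k - 1) = 0 then 0 else 1 := by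
    rw [hammingNorm_option, hnone]
    congr 2
    ext x
    simp [hev]
  split_ifs at hnorm with hlead
  · have : f.natDegree ≠ k - 1 := fun h => leadingCoeff_ne_zero.mpr hf (by rwa [leadingCoeff, h])
    omega
  · omega

end ProjectiveReedSolomon

/-- For `k = q - 3`, assuming `ρ(PRS(q+1, q-3)) = 3`, the number of cosets of
deep holes of `PRS(q+1, q-3)` is `(q-1)(q³ + 2q² + q)/2`. -/
theorem stmt8 {F : Type*} [Field F] [Fintype F] [DecidableEq F]
    (hq : 5 ≤ Fintype.card F)
    (hcov : covRad (PRS F (Fintype.card F - 3)) = 3) :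
    Nat.card {S : Set (Option F → F) // ∃ u : Option F → F,
        errDist u (PRS F (Fintype.card F - 3)) = 3 ∧
        S = (u + ·) '' (PRS F (Fintype.card F - 3))}
      = (Fintype.card F - 1) *
          ((Fintype.card F) ^ 3 + 2 * (Fintype.card F) ^ 2 + Fintype.card F) / 2 := by
  set q := Fintype.card F
  have hC := coe_prsCode F (q - 3)
  have hmin : ∀ c ∈ prsCode F (q - 3), c ≠ 0 → 2 * 2 < hammingNorm c := fun c hc hc0 => by
    have := card_add_two_le_hammingNorm_add_of_mem_PRS F (hC ▸ SetLike.mem_coe.mpr hc) hc0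
    omega
  have hρ : ∀ u, errDist u (prsCode F (q - 3) : Set (Option F → F)) ≤ 2 + 1 := fun u =>
    hC ▸ (errDist_le_covRad u _).trans hcov.le
  rw [← hC, card_cosets_eq_ncard_image_mk, ncard_image_mk_errDist_eq_succ _ hmin hρ,
    card_quotient_prsCode F (Nat.sub_le q 3), Fintype.card_option,
    show q + 1 - (q - 3) = 4 by omega]
  exact pow_four_sub_card_hammingBall_two q
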